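/- Let (A_{1,2}, A_{1,3}, A_{2,3}, X_1, X_2, X_3) be finitely valued random variables whose joint pmf factorizes as Q_{A_{1,2} A_{1,3} A_{2,3}} · Q_{X_1 | A_{1,2} A_{1,3}} · Q_{X_2 | A_{1,2} A_{1,3} A_{2,3}} · Q_{X_3 | A_{1,3} A_{2,3}}, where A_{1,2} is conditionally independent of A_{2,3} given A_{1,3}. Then I(X_1 ; X_3 | A_{1,3}) = 0, i.e., X_1 and X_3 are conditionally independent given A_{1,3}. -/

import Mathlib

open scoped BigOperators

noncomputable section

namespace SC

/-! ### Finite probability mass functions and information measures (base 2) -/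

/-- `p` is a probability mass function on a finite type. -/
def IsPMF {α : Type*} [Fintype α] (p : α → ℝ) : Prop :=
  (∀ a, 0 ≤ p a) ∧ ∑ a, p a = 1

/-- Distribution (pushforward pmf) of the random variable `f` under the pmf `p`. -/
def distOf {α β : Type*} [Fintype α] [DecidableEq β] (p : α → ℝ) (f : α → β) : β → ℝ :=
  fun b => ∑ a, if f a = b then p a else 0

/-- ℓ₁ (total variational) distance between two pmfs. -/
def l1dist {α : Type*} [Fintype α] (p q : α → ℝ) : ℝ := ∑ a, |p a - q a|

/-- Kullback–Leibler divergence (base 2), with the usual `0 log 0 = 0` conventions. -/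
def klDiv {α : Type*} [Fintype α] (p q : α → ℝ) : ℝ :=
  ∑ a, p a * Real.logb 2 (p a / q a)

/-- Shannon entropy (base 2) of a pmf. -/
def Hpmf {α : Type*} [Fintype α] (p : α → ℝ) : ℝ :=
  -∑ a, p a * Real.logb 2 (p a)

/-- Shannon entropy of a (finitely valued) random variable `f` under pmf `p`. -/
def entropy {Ω β : Type*} [Fintype Ω] [Fintype β] [DecidableEq β]
    (p : Ω → ℝ) (f : Ω → β) : ℝ := Hpmf (distOf p f)

/-- Conditional entropy `H(f | g)`. -/
def condEntropy {Ω β γ : Type*} [Fintype Ω] [Fintype β] [Fintype γ]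
    [DecidableEq β] [DecidableEq γ] (p : Ω → ℝ) (f : Ω → β) (g : Ω → γ) : ℝ :=
  entropy p (fun ω => (f ω, g ω)) - entropy p g

/-- Mutual information `I(f ; g)`. -/
def mutualInfo {Ω β γ : Type*} [Fintype Ω] [Fintype β] [Fintype γ]
    [DecidableEq β] [DecidableEq γ] (p : Ω → ℝ) (f : Ω → β) (g : Ω → γ) : ℝ :=
  entropy p f + entropy p g - entropy p (fun ω => (f ω, g ω))

/-- Conditional mutual information `I(f ; g | z)`. -/
def condMutualInfo {Ω β γ δ : Type*} [Fintype Ω] [Fintype β] [Fintype γ] [Fintype δ]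
    [DecidableEq β] [DecidableEq γ] [DecidableEq δ]
    (p : Ω → ℝ) (f : Ω → β) (g : Ω → γ) (z : Ω → δ) : ℝ :=
  entropy p (fun ω => (f ω, z ω)) + entropy p (fun ω => (g ω, z ω))
    - entropy p (fun ω => (f ω, g ω, z ω)) - entropy p z

/-- Conditional independence of `f` and `g` given `z` under the pmf `p`. -/
def CondIndep {Ω β γ δ : Type*} [Fintype Ω] [Fintype β] [Fintype γ] [Fintype δ]
    [DecidableEq β] [DecidableEq γ] [DecidableEq δ]
    (p : Ω → ℝ) (f : Ω → β) (g : Ω → γ) (z : Ω → δ) : Prop :=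
  ∀ b c d, distOf p (fun ω => ((f ω, g ω), z ω)) ((b, c), d) * distOf p z d
    = distOf p (fun ω => (f ω, z ω)) (b, d) * distOf p (fun ω => (g ω, z ω)) (c, d)

/-- Conditional distribution of `f` given `g` under `p` (uniform fallback on null events). -/
def condDist {Ω α β : Type*} [Fintype Ω] [Fintype α] [DecidableEq α] [DecidableEq β]
    (p : Ω → ℝ) (f : Ω → α) (g : Ω → β) : α → β → ℝ :=
  fun a b =>
    if distOf p g b = 0 then (Fintype.card α : ℝ)⁻¹
    else distOf p (fun ω => (f ω, g ω)) (a, b) / distOf p g b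

/-- Size of an index set of rate `R` and blocklength `n`, i.e. `⟦1, 2^{nR}⟧`. -/
def codeSize (n : ℕ) (R : ℝ) : ℕ := max 1 ⌊(2 : ℝ) ^ ((n : ℝ) * R)⌋₊

lemma codeSize_pos (n : ℕ) (R : ℝ) : 0 < codeSize n R :=
  lt_of_lt_of_le one_pos (le_max_left _ _)

/-!
Summing out `X₂` leaves `qA(a) q₁(x₁ | a₁₂ a₁₃) q₃(x₃ | a₁₃ a₂₃)` as the law of `(A, X₁, X₃)`.
The conditional independence of `A₁₂` and `A₂₃` given `A₁₃` writes `qA` as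
`P(a₁₂ a₁₃) P(a₂₃ a₁₃) / P(a₁₃)`, so the law of `(X₁, X₃, A₁₃)` is a function of `(x₁, a₁₃)`
times a function of `(x₃, a₁₃)`: `X₁` and `X₃` are conditionally independent given `A₁₃`.
Then every summand `log (P(x₁x₃a₁₃) P(a₁₃) / (P(x₁a₁₃) P(x₃a₁₃)))` of `I(X₁ ; X₃ | A₁₃)` vanishes.
-/

section General

variable {Ω β γ δ : Type*} [Fintype Ω] [DecidableEq β] [DecidableEq γ] [DecidableEq δ]

lemma distOf_comp [Fintype β] (p : Ω → ℝ) (f : Ω → β) (φ : β → γ) :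
    distOf p (fun ω => φ (f ω)) = distOf (distOf p f) φ := by
  funext c
  simp only [distOf, Finset.ite_sum_zero]
  rw [Finset.sum_comm]
  refine Finset.sum_congr rfl fun ω _ => ?_
  rw [Finset.sum_eq_single (f ω) (fun b _ hb => by simp [Ne.symm hb]) (by simp)]
  simp

lemma distOf_comp_apply_of_injective (p : Ω → ℝ) (f : Ω → β) {e : β → γ}
    (he : Function.Injective e) (b : β) :
    distOf p (fun ω => e (f ω)) (e b) = distOf p f b := by
  simp [distOf, he.eq_iff]

lemma distOf_nonneg {p : Ω → ℝ} (hp : ∀ ω, 0 ≤ p ω) (f : Ω → β) (b : β) :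
    0 ≤ distOf p f b :=
  Finset.sum_nonneg fun ω _ => by split <;> simp [hp]

lemma le_distOf_apply {p : Ω → ℝ} (hp : ∀ ω, 0 ≤ p ω) (f : Ω → β) (ω : Ω) :
    p ω ≤ distOf p f (f ω) := by
  have := Finset.single_le_sum (f := fun ω' => if f ω' = f ω then p ω' else 0)
    (fun ω' _ => by split <;> simp [hp]) (Finset.mem_univ ω)
  simpa [distOf] using this

lemma distOf_apply_ne_zero {p : Ω → ℝ} (hp : ∀ ω, 0 ≤ p ω) {ω : Ω} (hω : 0 < p ω)
    (f : Ω → β) : distOf p f (f ω) ≠ 0 :=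
  (hω.trans_le (le_distOf_apply hp f ω)).ne'

lemma entropy_eq_sum [Fintype β] (p : Ω → ℝ) (f : Ω → β) :
    entropy p f = -∑ ω, p ω * Real.logb 2 (distOf p f (f ω)) := by
  simp only [entropy, Hpmf, distOf, Finset.sum_mul]
  rw [Finset.sum_comm]
  simp [ite_mul]

end General

section CondIndep

variable {Ω β γ δ : Type*} [Fintype Ω] [Fintype β] [Fintype γ] [Fintype δ]
  [DecidableEq β] [DecidableEq γ] [DecidableEq δ]

lemma distOf_fz_eq_sum (p : Ω → ℝ) (f : Ω → β) (g : Ω → γ) (z : Ω → δ) (b : β) (d : δ) :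
    distOf p (fun ω => (f ω, z ω)) (b, d)
      = ∑ c, distOf p (fun ω => ((f ω, g ω), z ω)) ((b, c), d) := by
  rw [distOf_comp p (fun ω => ((f ω, g ω), z ω)) (fun x => (x.1.1, x.2))]
  simp [distOf, Fintype.sum_prod_type, Prod.ext_iff, ite_and]

lemma distOf_gz_eq_sum (p : Ω → ℝ) (f : Ω → β) (g : Ω → γ) (z : Ω → δ) (c : γ) (d : δ) :
    distOf p (fun ω => (g ω, z ω)) (c, d)
      = ∑ b, distOf p (fun ω => ((f ω, g ω), z ω)) ((b, c), d) := by
  rw [distOf_comp p (fun ω => ((f ω, g ω), z ω)) (fun x => (x.1.2, x.2))]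
  simp [distOf, Fintype.sum_prod_type, Prod.ext_iff, ite_and]

lemma distOf_z_eq_sum (p : Ω → ℝ) (f : Ω → β) (g : Ω → γ) (z : Ω → δ) (d : δ) :
    distOf p z d = ∑ b, ∑ c, distOf p (fun ω => ((f ω, g ω), z ω)) ((b, c), d) := by
  rw [distOf_comp p (fun ω => ((f ω, g ω), z ω)) Prod.snd]
  simp [distOf, Fintype.sum_prod_type]

lemma CondIndep.distOf_eq_mul_div {p : Ω → ℝ} {f : Ω → β} {g : Ω → γ} {z : Ω → δ}
    (hp : ∀ ω, 0 ≤ p ω) (h : CondIndep p f g z) (b : β) (c : γ) (d : δ) :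
    distOf p (fun ω => ((f ω, g ω), z ω)) ((b, c), d)
      = distOf p (fun ω => (f ω, z ω)) (b, d) * distOf p (fun ω => (g ω, z ω)) (c, d)
        / distOf p z d := by
  rcases eq_or_ne (distOf p z d) 0 with hz | hz
  -- the right-hand side is `x / 0 = 0`, and the joint law vanishes together with its marginal
  · rw [hz, div_zero]
    rw [distOf_z_eq_sum p f g z, Finset.sum_eq_zero_iff_of_nonneg
      fun _ _ => Finset.sum_nonneg fun _ _ => distOf_nonneg hp _ _] at hz
    exact (Finset.sum_eq_zero_iff_of_nonneg fun _ _ => distOf_nonneg hp _ _).1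
      (hz b (Finset.mem_univ b)) c (Finset.mem_univ c)
  · rw [eq_div_iff hz]
    exact h b c d

lemma condIndep_of_distOf_eq_mul {p : Ω → ℝ} {f : Ω → β} {g : Ω → γ} {z : Ω → δ}
    (G : β → δ → ℝ) (H : γ → δ → ℝ)
    (hJ : ∀ b c d, distOf p (fun ω => ((f ω, g ω), z ω)) ((b, c), d) = G b d * H c d) :
    CondIndep p f g z := by
  intro b c d
  rw [distOf_z_eq_sum p f g z, distOf_fz_eq_sum p f g z, distOf_gz_eq_sum p f g z]
  simp only [hJ, ← Finset.mul_sum, ← Finset.sum_mul]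
  ring

lemma condMutualInfo_eq_sum (p : Ω → ℝ) (f : Ω → β) (g : Ω → γ) (z : Ω → δ) :
    condMutualInfo p f g z = ∑ ω, p ω *
      (Real.logb 2 (distOf p (fun ω => (f ω, g ω, z ω)) (f ω, g ω, z ω))
        + Real.logb 2 (distOf p z (z ω))
        - Real.logb 2 (distOf p (fun ω => (f ω, z ω)) (f ω, z ω))
        - Real.logb 2 (distOf p (fun ω => (g ω, z ω)) (g ω, z ω))) := by
  simp only [condMutualInfo, entropy_eq_sum, mul_add, mul_sub, Finset.sum_add_distrib,
    Finset.sum_sub_distrib]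
  ring

lemma condMutualInfo_eq_zero_of_condIndep {p : Ω → ℝ} (hp : ∀ ω, 0 ≤ p ω) {f : Ω → β}
    {g : Ω → γ} {z : Ω → δ} (h : CondIndep p f g z) : condMutualInfo p f g z = 0 := by
  rw [condMutualInfo_eq_sum]
  refine Finset.sum_eq_zero fun ω _ => ?_
  rcases (hp ω).eq_or_lt with h0 | hpos
  · simp [← h0]
  have hassoc := distOf_comp_apply_of_injective p (fun ω => ((f ω, g ω), z ω))
    (Equiv.prodAssoc β γ δ).injective ((f ω, g ω), z ω)
  simp only [Equiv.prodAssoc_apply] at hassoc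
  have hlog : Real.logb 2 (distOf p (fun ω => (f ω, g ω, z ω)) (f ω, g ω, z ω))
        + Real.logb 2 (distOf p z (z ω))
      = Real.logb 2 (distOf p (fun ω => (f ω, z ω)) (f ω, z ω))
        + Real.logb 2 (distOf p (fun ω => (g ω, z ω)) (g ω, z ω)) := by
    rw [hassoc, ← Real.logb_mul (distOf_apply_ne_zero hp hpos (fun ω => ((f ω, g ω), z ω)))
        (distOf_apply_ne_zero hp hpos z),
      ← Real.logb_mul (distOf_apply_ne_zero hp hpos (fun ω => (f ω, z ω)))
        (distOf_apply_ne_zero hp hpos (fun ω => (g ω, z ω))),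
      h (f ω) (g ω) (z ω)]
  rw [hlog]
  ring

end CondIndep

section Model

variable {𝒜₁₂ 𝒜₁₃ 𝒜₂₃ 𝒳₁ 𝒳₂ 𝒳₃ : Type*}
  [Fintype 𝒜₁₂] [Fintype 𝒜₁₃] [Fintype 𝒜₂₃] [Fintype 𝒳₁] [Fintype 𝒳₂] [Fintype 𝒳₃]
  [DecidableEq 𝒜₁₂] [DecidableEq 𝒜₁₃] [DecidableEq 𝒜₂₃] [DecidableEq 𝒳₁] [DecidableEq 𝒳₃]
  {p : (𝒜₁₂ × 𝒜₁₃ × 𝒜₂₃) × 𝒳₁ × 𝒳₂ × 𝒳₃ → ℝ} {qA : 𝒜₁₂ × 𝒜₁₃ × 𝒜₂₃ → ℝ}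
  {q1 : 𝒳₁ → 𝒜₁₂ × 𝒜₁₃ → ℝ} {q2 : 𝒳₂ → 𝒜₁₂ × 𝒜₁₃ × 𝒜₂₃ → ℝ} {q3 : 𝒳₃ → 𝒜₁₃ × 𝒜₂₃ → ℝ}

lemma distOf_A_X₁_X₃_eq
    (hfact : ∀ ω : (𝒜₁₂ × 𝒜₁₃ × 𝒜₂₃) × 𝒳₁ × 𝒳₂ × 𝒳₃,
      p ω = qA ω.1 * q1 ω.2.1 (ω.1.1, ω.1.2.1) * q2 ω.2.2.1 ω.1 *
        q3 ω.2.2.2 (ω.1.2.1, ω.1.2.2))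
    (hq2 : ∀ a, ∑ x, q2 x a = 1) :
    distOf p (fun ω => (ω.1, ω.2.1, ω.2.2.2))
      = fun t => qA t.1 * q1 t.2.1 (t.1.1, t.1.2.1) * q3 t.2.2 (t.1.2.1, t.1.2.2) := by
  funext ⟨a, x₁, x₃⟩
  simp only [distOf, Prod.ext_iff, hfact, ite_and, Fintype.sum_prod_type, Finset.sum_ite_irrel,
    Finset.sum_ite_eq', Finset.mem_univ, if_true, Finset.sum_const_zero]
  rw [← Finset.sum_mul, ← Finset.mul_sum, hq2, mul_one]

lemma distOf_A_eq
    (hfact : ∀ ω : (𝒜₁₂ × 𝒜₁₃ × 𝒜₂₃) × 𝒳₁ × 𝒳₂ × 𝒳₃,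
      p ω = qA ω.1 * q1 ω.2.1 (ω.1.1, ω.1.2.1) * q2 ω.2.2.1 ω.1 *
        q3 ω.2.2.2 (ω.1.2.1, ω.1.2.2))
    (hq1 : ∀ a, ∑ x, q1 x a = 1) (hq2 : ∀ a, ∑ x, q2 x a = 1) (hq3 : ∀ a, ∑ x, q3 x a = 1)
    (a : 𝒜₁₂ × 𝒜₁₃ × 𝒜₂₃) :
    distOf p (fun ω => ω.1) a = qA a := by
  rw [distOf_comp p (fun ω => (ω.1, ω.2.1, ω.2.2.2)) Prod.fst, distOf_A_X₁_X₃_eq hfact hq2]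
  simp [distOf, Fintype.sum_prod_type, ← Finset.mul_sum, hq1, hq3]

lemma distOf_X₁_X₃_A₁₃_eq
    (hfact : ∀ ω : (𝒜₁₂ × 𝒜₁₃ × 𝒜₂₃) × 𝒳₁ × 𝒳₂ × 𝒳₃,
      p ω = qA ω.1 * q1 ω.2.1 (ω.1.1, ω.1.2.1) * q2 ω.2.2.1 ω.1 *
        q3 ω.2.2.2 (ω.1.2.1, ω.1.2.2))
    (hq2 : ∀ a, ∑ x, q2 x a = 1) (x₁ : 𝒳₁) (x₃ : 𝒳₃) (a₁₃ : 𝒜₁₃) :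
    distOf p (fun ω => ((ω.2.1, ω.2.2.2), ω.1.2.1)) ((x₁, x₃), a₁₃)
      = ∑ a₁₂, ∑ a₂₃, qA (a₁₂, a₁₃, a₂₃) * q1 x₁ (a₁₂, a₁₃) * q3 x₃ (a₁₃, a₂₃) := by
  rw [distOf_comp p (fun ω => (ω.1, ω.2.1, ω.2.2.2)) (fun t => ((t.2.1, t.2.2), t.1.2.1)),
    distOf_A_X₁_X₃_eq hfact hq2]
  simp [distOf, Fintype.sum_prod_type, Prod.ext_iff, ite_and]

end Model

theorem statement_14_general {𝒜₁₂ 𝒜₁₃ 𝒜₂₃ 𝒳₁ 𝒳₂ 𝒳₃ : Type}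
    [Fintype 𝒜₁₂] [Fintype 𝒜₁₃] [Fintype 𝒜₂₃] [Fintype 𝒳₁] [Fintype 𝒳₂] [Fintype 𝒳₃]
    [DecidableEq 𝒜₁₂] [DecidableEq 𝒜₁₃] [DecidableEq 𝒜₂₃]
    [DecidableEq 𝒳₁] [DecidableEq 𝒳₂] [DecidableEq 𝒳₃]
    (p : (𝒜₁₂ × 𝒜₁₃ × 𝒜₂₃) × 𝒳₁ × 𝒳₂ × 𝒳₃ → ℝ) (hp : IsPMF p)
    (qA : 𝒜₁₂ × 𝒜₁₃ × 𝒜₂₃ → ℝ)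
    (q1 : 𝒳₁ → 𝒜₁₂ × 𝒜₁₃ → ℝ)
    (q2 : 𝒳₂ → 𝒜₁₂ × 𝒜₁₃ × 𝒜₂₃ → ℝ)
    (q3 : 𝒳₃ → 𝒜₁₃ × 𝒜₂₃ → ℝ)
    (hq1 : ∀ a, IsPMF fun x => q1 x a)
    (hq2 : ∀ a, IsPMF fun x => q2 x a)
    (hq3 : ∀ a, IsPMF fun x => q3 x a)
    (hfact : ∀ ω : (𝒜₁₂ × 𝒜₁₃ × 𝒜₂₃) × 𝒳₁ × 𝒳₂ × 𝒳₃,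
      p ω = qA ω.1 * q1 ω.2.1 (ω.1.1, ω.1.2.1) * q2 ω.2.2.1 ω.1 *
        q3 ω.2.2.2 (ω.1.2.1, ω.1.2.2))
    (hci : CondIndep p (fun ω => ω.1.1) (fun ω => ω.1.2.2) (fun ω => ω.1.2.1)) :
    condMutualInfo p (fun ω => ω.2.1) (fun ω => ω.2.2.2) (fun ω => ω.1.2.1) = 0 := by
  set Z := fun a₁₃ => distOf p (fun ω => ω.1.2.1) a₁₃
  set M₁₂ := fun a₁₂ a₁₃ => distOf p (fun ω => (ω.1.1, ω.1.2.1)) (a₁₂, a₁₃)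
  set M₂₃ := fun a₂₃ a₁₃ => distOf p (fun ω => (ω.1.2.2, ω.1.2.1)) (a₂₃, a₁₃)
  have hqA (a₁₂ a₁₃ a₂₃) : qA (a₁₂, a₁₃, a₂₃) = M₁₂ a₁₂ a₁₃ * M₂₃ a₂₃ a₁₃ / Z a₁₃ := by
    have he : Function.Injective fun a : 𝒜₁₂ × 𝒜₁₃ × 𝒜₂₃ => ((a.1, a.2.2), a.2.1) := by
      rintro ⟨_, _, _⟩ ⟨_, _, _⟩ h
      simp_all
    rw [← distOf_A_eq hfact (fun a => (hq1 a).2) (fun a => (hq2 a).2) (fun a => (hq3 a).2),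
      ← distOf_comp_apply_of_injective p (fun ω => ω.1) he]
    exact hci.distOf_eq_mul_div hp.1 a₁₂ a₂₃ a₁₃
  refine condMutualInfo_eq_zero_of_condIndep hp.1 (condIndep_of_distOf_eq_mul
    (fun x₁ a₁₃ => ∑ a₁₂, M₁₂ a₁₂ a₁₃ * q1 x₁ (a₁₂, a₁₃) / Z a₁₃)
    (fun x₃ a₁₃ => ∑ a₂₃, M₂₃ a₂₃ a₁₃ * q3 x₃ (a₁₃, a₂₃)) fun x₁ x₃ a₁₃ => ?_)
  rw [distOf_X₁_X₃_A₁₃_eq hfact (fun a => (hq2 a).2), Finset.sum_mul_sum]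
  refine Finset.sum_congr rfl fun a₁₂ _ => Finset.sum_congr rfl fun a₂₃ _ => ?_
  rw [hqA]
  ring

/-- If the joint pmf of `(A_{1,2}, A_{1,3}, A_{2,3}, X_1, X_2, X_3)`
factorizes as `Q_{A} · Q_{X_1|A_{1,2}A_{1,3}} · Q_{X_2|A_{1,2}A_{1,3}A_{2,3}} ·
Q_{X_3|A_{1,3}A_{2,3}}` with `A_{1,2} ⊥ A_{2,3} | A_{1,3}`, then
`I(X_1 ; X_3 | A_{1,3}) = 0`. -/
theorem statement_14 {𝒜₁₂ 𝒜₁₃ 𝒜₂₃ 𝒳₁ 𝒳₂ 𝒳₃ : Type}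
    [Fintype 𝒜₁₂] [Fintype 𝒜₁₃] [Fintype 𝒜₂₃] [Fintype 𝒳₁] [Fintype 𝒳₂] [Fintype 𝒳₃]
    [DecidableEq 𝒜₁₂] [DecidableEq 𝒜₁₃] [DecidableEq 𝒜₂₃]
    [DecidableEq 𝒳₁] [DecidableEq 𝒳₂] [DecidableEq 𝒳₃]
    (p : (𝒜₁₂ × 𝒜₁₃ × 𝒜₂₃) × 𝒳₁ × 𝒳₂ × 𝒳₃ → ℝ) (hp : IsPMF p)
    (qA : 𝒜₁₂ × 𝒜₁₃ × 𝒜₂₃ → ℝ)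
    (q1 : 𝒳₁ → 𝒜₁₂ × 𝒜₁₃ → ℝ)
    (q2 : 𝒳₂ → 𝒜₁₂ × 𝒜₁₃ × 𝒜₂₃ → ℝ)
    (q3 : 𝒳₃ → 𝒜₁₃ × 𝒜₂₃ → ℝ)
    (hqA : IsPMF qA)
    (hq1 : ∀ a, IsPMF fun x => q1 x a)
    (hq2 : ∀ a, IsPMF fun x => q2 x a)
    (hq3 : ∀ a, IsPMF fun x => q3 x a)
    (hfact : ∀ ω : (𝒜₁₂ × 𝒜₁₃ × 𝒜₂₃) × 𝒳₁ × 𝒳₂ × 𝒳₃,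
      p ω = qA ω.1 * q1 ω.2.1 (ω.1.1, ω.1.2.1) * q2 ω.2.2.1 ω.1 *
        q3 ω.2.2.2 (ω.1.2.1, ω.1.2.2))
    (hci : CondIndep p (fun ω => ω.1.1) (fun ω => ω.1.2.2) (fun ω => ω.1.2.1)) :
    condMutualInfo p (fun ω => ω.2.1) (fun ω => ω.2.2.2) (fun ω => ω.1.2.1) = 0 :=
  statement_14_general p hp qA q1 q2 q3 hq1 hq2 hq3 hfact hci

end SC
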